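/- arXiv:2405.05509 — 5 statements merged into one kernel-verified Lean document; each statement's English description precedes it below -/
import Mathlib

section
/- Let X and Y be real Banach spaces and S : X → Y a bounded linear operator. Then for every n ≥ 1, the n-th Gelfand number satisfies c_n(S) ≤ n · (∏_{k=1}^n h_k(S))^{1/n}, where h_k are the Hilbert numbers. -/
/-- The real Hilbert sequence space ℓ₂ = lp(ℕ, 2). -/
abbrev Ell2 : Type := lp (fun _ : ℕ => ℝ) 2

/-- Approximation numbers. -/
noncomputable def approxNumber {X Y : Type*} [NormedAddCommGroup X] [NormedSpace ℝ X]
    [NormedAddCommGroup Y] [NormedSpace ℝ Y] (n : ℕ) (S : X →L[ℝ] Y) : ℝ :=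
  sInf {r : ℝ | ∃ L : X →L[ℝ] Y, LinearMap.rank (L : X →ₗ[ℝ] Y) < n ∧ r = ‖S - L‖}

/-- Gelfand numbers. -/
noncomputable def gelfandNumber {X Y : Type*} [NormedAddCommGroup X] [NormedSpace ℝ X]
    [NormedAddCommGroup Y] [NormedSpace ℝ Y] (n : ℕ) (S : X →L[ℝ] Y) : ℝ :=
  sInf {r : ℝ | ∃ M : Submodule ℝ X, IsClosed (M : Set X) ∧ Module.rank ℝ (X ⧸ M) < n ∧
    r = ‖S.comp M.subtypeL‖}

/-- The canonical quotient map onto `Y ⧸ N`, as a continuous linear map (with respect to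
the quotient (semi)norm). -/
noncomputable def quotientCLM {Y : Type*} [NormedAddCommGroup Y] [NormedSpace ℝ Y]
    (N : Submodule ℝ Y) : Y →L[ℝ] Y ⧸ N :=
  LinearMap.mkContinuous N.mkQ 1 fun y => by
    simpa using Submodule.Quotient.norm_mk_le N y

/-- Kolmogorov numbers. -/
noncomputable def kolmogorovNumber {X Y : Type*} [NormedAddCommGroup X] [NormedSpace ℝ X]
    [NormedAddCommGroup Y] [NormedSpace ℝ Y] (n : ℕ) (S : X →L[ℝ] Y) : ℝ :=
  sInf {r : ℝ | ∃ N : Submodule ℝ Y, Module.rank ℝ N < n ∧ r = ‖(quotientCLM N).comp S‖}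

/-- Hilbert numbers. -/
noncomputable def hilbertNumber {X Y : Type*} [NormedAddCommGroup X] [NormedSpace ℝ X]
    [NormedAddCommGroup Y] [NormedSpace ℝ Y] (n : ℕ) (S : X →L[ℝ] Y) : ℝ :=
  sSup {r : ℝ | ∃ (A : Ell2 →L[ℝ] X) (B : Y →L[ℝ] Ell2), A ≠ 0 ∧ B ≠ 0 ∧
    r = approxNumber n (B.comp (S.comp A)) / (‖B‖ * ‖A‖)}

/-!
Fix `t < c_n(S)`. Choosing inductively a vector of norm `< 1` on which `S` exceeds `t` inside the
closed subspace `⋂_{i<j} ker (b_i ∘ S)` (of codimension `< n`), and a norming functional `b_j` at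
its image, yields `x_1, …, x_n` and `b_1, …, b_n` in the unit balls with `t ≤ b_j (S x_j)` and
`b_i (S x_j) = 0` for `i < j`. The operator `T = B S A` on `ℓ₂ⁿ`, where `A e_j = x_j` and
`(B y)_i = b_i y`, then has a triangular matrix, so `tⁿ ≤ |det T|`. Now `|det T|` is the product
of the singular values of `T`, the `k`-th singular value is at most `a_k(T)` (Courant–Fischer),
and `a_k(T) ≤ ‖B‖ ‖A‖ h_k(S) ≤ n h_k(S)` because `‖A‖, ‖B‖ ≤ √n`. Hence `tⁿ ≤ nⁿ ∏ h_k(S)`.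
-/

section ApproximationNumbers

variable {X Y Z W : Type*} [NormedAddCommGroup X] [NormedSpace ℝ X]
  [NormedAddCommGroup Y] [NormedSpace ℝ Y] [NormedAddCommGroup Z] [NormedSpace ℝ Z]
  [NormedAddCommGroup W] [NormedSpace ℝ W] {n : ℕ}

theorem approxNumber_nonneg (n : ℕ) (S : X →L[ℝ] Y) : 0 ≤ approxNumber n S :=
  Real.sInf_nonneg fun _ ⟨_, _, hr⟩ => hr ▸ norm_nonneg _

theorem approxNumber_le_norm_sub (S L : X →L[ℝ] Y) (hL : LinearMap.rank (L : X →ₗ[ℝ] Y) < n) :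
    approxNumber n S ≤ ‖S - L‖ :=
  csInf_le ⟨0, fun _ ⟨_, _, hr⟩ => hr ▸ norm_nonneg _⟩ ⟨L, hL, rfl⟩

theorem approxNumber_le_norm (hn : n ≠ 0) (S : X →L[ℝ] Y) : approxNumber n S ≤ ‖S‖ := by
  simpa using approxNumber_le_norm_sub S 0 (by simpa [pos_iff_ne_zero] using hn)

theorem approxNumber_setOf_nonempty (hn : n ≠ 0) (S : X →L[ℝ] Y) :
    {r : ℝ | ∃ L : X →L[ℝ] Y, LinearMap.rank (L : X →ₗ[ℝ] Y) < n ∧ r = ‖S - L‖}.Nonempty :=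
  ⟨_, 0, by simpa [pos_iff_ne_zero] using hn, rfl⟩

theorem le_approxNumber (hn : n ≠ 0) {S : X →L[ℝ] Y} {r : ℝ}
    (h : ∀ L : X →L[ℝ] Y, LinearMap.rank (L : X →ₗ[ℝ] Y) < n → r ≤ ‖S - L‖) :
    r ≤ approxNumber n S :=
  le_csInf (approxNumber_setOf_nonempty hn S) fun _ ⟨L, hL, hr⟩ => hr ▸ h L hL

theorem approxNumber_comp_le (hn : n ≠ 0) (U : Z →L[ℝ] W) (V : Y →L[ℝ] Z) (R : X →L[ℝ] Y) :
    approxNumber n (U ∘L V ∘L R) ≤ ‖U‖ * approxNumber n V * ‖R‖ := by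
  have h : approxNumber n (U ∘L V ∘L R) ≤ _ :=
    le_csInf (Set.Nonempty.smul_set (a := ‖U‖ * ‖R‖) (approxNumber_setOf_nonempty hn V)) ?_
  · rwa [Real.sInf_smul_of_nonneg (by positivity), smul_eq_mul, mul_right_comm] at h
  rintro _ ⟨_, ⟨L, hL, rfl⟩, rfl⟩
  have hrank : LinearMap.rank ((U ∘L L ∘L R : X →L[ℝ] W) : X →ₗ[ℝ] W) < n := by
    have hR := LinearMap.rank_comp_le_left (R : X →ₗ[ℝ] Y) (L : Y →ₗ[ℝ] Z)
    have hU := LinearMap.lift_rank_comp_le_right ((L ∘L R : X →L[ℝ] Z) : X →ₗ[ℝ] Z)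
      (U : Z →ₗ[ℝ] W)
    exact Cardinal.lift_lt_nat_iff.1 (hU.trans_lt (Cardinal.lift_lt_nat_iff.2 (hR.trans_lt hL)))
  calc approxNumber n (U ∘L V ∘L R) ≤ ‖U ∘L V ∘L R - U ∘L L ∘L R‖ :=
        approxNumber_le_norm_sub _ _ hrank
    _ = ‖U ∘L (V - L) ∘L R‖ := by
        simp [ContinuousLinearMap.comp_sub, ContinuousLinearMap.sub_comp]
    _ ≤ ‖U‖ * (‖V - L‖ * ‖R‖) :=
        (U.opNorm_comp_le _).trans (by gcongr; exact (V - L).opNorm_comp_le R)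
    _ = (‖U‖ * ‖R‖) • ‖V - L‖ := by rw [smul_eq_mul]; ring

end ApproximationNumbers

section HilbertNumbers

variable {X Y : Type*} [NormedAddCommGroup X] [NormedSpace ℝ X]
  [NormedAddCommGroup Y] [NormedSpace ℝ Y] {k : ℕ}

theorem hilbertNumber_nonneg (k : ℕ) (S : X →L[ℝ] Y) : 0 ≤ hilbertNumber k S :=
  Real.sSup_nonneg fun _ ⟨A, B, _, _, hr⟩ => hr ▸ by
    have := approxNumber_nonneg k (B ∘L S ∘L A)
    positivity

theorem approxNumber_comp_le_hilbertNumber_mul (hk : k ≠ 0) (S : X →L[ℝ] Y)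
    (A : Ell2 →L[ℝ] X) (B : Y →L[ℝ] Ell2) :
    approxNumber k (B ∘L S ∘L A) ≤ hilbertNumber k S * (‖B‖ * ‖A‖) := by
  by_cases hAB : A = 0 ∨ B = 0
  · have h0 : B ∘L S ∘L A = 0 := by rcases hAB with rfl | rfl <;> simp
    calc approxNumber k (B ∘L S ∘L A) ≤ ‖B ∘L S ∘L A‖ := approxNumber_le_norm hk _
      _ = 0 := by rw [h0, norm_zero]
      _ ≤ _ := mul_nonneg (hilbertNumber_nonneg k S) (by positivity)
  push Not at hAB
  have hBA : 0 < ‖B‖ * ‖A‖ := mul_pos (norm_pos_iff.2 hAB.2) (norm_pos_iff.2 hAB.1)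
  rw [← div_le_iff₀ hBA]
  refine le_csSup ⟨‖S‖, ?_⟩ ⟨A, B, hAB.1, hAB.2, rfl⟩
  rintro _ ⟨A, B, hA, hB, rfl⟩
  rw [div_le_iff₀ (mul_pos (norm_pos_iff.2 hB) (norm_pos_iff.2 hA))]
  calc approxNumber k (B ∘L S ∘L A) ≤ ‖B ∘L S ∘L A‖ := approxNumber_le_norm hk _
    _ ≤ ‖B‖ * (‖S‖ * ‖A‖) := (B.opNorm_comp_le _).trans (by gcongr; exact S.opNorm_comp_le A)
    _ = ‖S‖ * (‖B‖ * ‖A‖) := by ring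

theorem nonempty_linearIsometry_ell2 (E : Type*) [NormedAddCommGroup E] [InnerProductSpace ℝ E]
    [FiniteDimensional ℝ E] : Nonempty (E →ₗᵢ[ℝ] Ell2) := by
  let b := stdOrthonormalBasis ℝ E
  let e : HilbertBasis ℕ ℝ Ell2 := default
  refine ⟨(b.toBasis.constr ℝ fun i => e i).isometryOfOrthonormal (v := b.toBasis) (by simp) ?_⟩
  convert e.orthonormal.comp _ Fin.val_injective
  ext i : 1
  simp

theorem approxNumber_comp_le_hilbertNumber_mul_of_finiteDimensional {E : Type*}
    [NormedAddCommGroup E] [InnerProductSpace ℝ E] [FiniteDimensional ℝ E] (hk : k ≠ 0)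
    (S : X →L[ℝ] Y) (A : E →L[ℝ] X) (B : Y →L[ℝ] E) :
    approxNumber k (B ∘L S ∘L A) ≤ hilbertNumber k S * (‖B‖ * ‖A‖) := by
  have := FiniteDimensional.complete ℝ E
  obtain ⟨J⟩ := nonempty_linearIsometry_ell2 E
  set J' := J.toContinuousLinearMap
  set P := ContinuousLinearMap.adjoint J'
  have hJ : ‖J'‖ ≤ 1 := J.norm_toContinuousLinearMap_le
  have hP : ‖P‖ ≤ 1 := by rwa [LinearIsometryEquiv.norm_map]
  have hPJ (x : E) : P (J' x) = x := congr($(J.adjoint_comp_self) x)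
  set T := (J' ∘L B) ∘L S ∘L (A ∘L P)
  have hfactor : B ∘L S ∘L A = P ∘L T ∘L J' := by
    ext x
    simp [T, hPJ]
  calc approxNumber k (B ∘L S ∘L A) ≤ ‖P‖ * approxNumber k T * ‖J'‖ :=
        hfactor ▸ approxNumber_comp_le hk _ _ _
    _ ≤ 1 * approxNumber k T * 1 := by
        have := approxNumber_nonneg k T
        gcongr
    _ ≤ hilbertNumber k S * (‖J' ∘L B‖ * ‖A ∘L P‖) := by
        rw [mul_one, one_mul]
        exact approxNumber_comp_le_hilbertNumber_mul hk S _ _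
    _ ≤ hilbertNumber k S * (‖B‖ * ‖A‖) := by
        have := hilbertNumber_nonneg k S
        gcongr
        · exact (J'.opNorm_comp_le B).trans (mul_le_of_le_one_left (norm_nonneg _) hJ)
        · exact (A.opNorm_comp_le P).trans (mul_le_of_le_one_right (norm_nonneg _) hP)

end HilbertNumbers

section SingularValues

open Module RealInnerProductSpace

variable {E F : Type*} [NormedAddCommGroup E] [InnerProductSpace ℝ E] [FiniteDimensional ℝ E]
  [NormedAddCommGroup F] [InnerProductSpace ℝ F]

theorem LinearMap.IsSymmetric.eigenvalues_mul_norm_sq_le_inner {f : E →ₗ[ℝ] E}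
    (hf : f.IsSymmetric) {n : ℕ} (hn : finrank ℝ E = n) {k : Fin n} {x : E}
    (hx : ∀ i, k < i → ⟪hf.eigenvectorBasis hn i, x⟫ = 0) :
    hf.eigenvalues hn k * ‖x‖ ^ 2 ≤ ⟪x, f x⟫ := by
  set e := hf.eigenvectorBasis hn
  have hcoord (i : Fin n) : ⟪e i, f x⟫ = hf.eigenvalues hn i * ⟪e i, x⟫ := by
    simpa [e, OrthonormalBasis.repr_apply_apply] using hf.eigenvectorBasis_apply_self_apply hn x i
  rw [← e.sum_sq_inner_right, ← e.sum_inner_mul_inner, Finset.mul_sum]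
  refine Finset.sum_le_sum fun i _ => ?_
  rw [hcoord, real_inner_comm (e i) x]
  rcases le_or_gt i k with hik | hki
  · have := hf.eigenvalues_antitone hn hik
    nlinarith [sq_nonneg ⟪e i, x⟫]
  · rw [hx i hki]
    simp

theorem OrthonormalBasis.exists_ne_zero_mem_ker_inner_eq_zero {n k : ℕ}
    (b : OrthonormalBasis (Fin n) ℝ E) (L : E →ₗ[ℝ] F)
    (hL : finrank ℝ (LinearMap.range L) ≤ k) (hk : k < n) :
    ∃ x ≠ 0, L x = 0 ∧ ∀ i : Fin n, k < i → ⟪b i, x⟫ = 0 := by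
  set V := Submodule.span ℝ (Set.range (b ∘ Fin.castLE hk.nat_succ_le))
  have hV : finrank ℝ V = k + 1 := by
    rw [finrank_span_eq_card ((b.orthonormal.comp _ (Fin.castLE_injective _)).linearIndependent),
      Fintype.card_fin]
  have hker := L.finrank_range_add_finrank_ker
  have hE : finrank ℝ E = n := by simp [finrank_eq_card_basis b.toBasis]
  have hnd : ¬ Disjoint V (LinearMap.ker L) := fun h => by
    have := Submodule.finrank_add_finrank_le_of_disjoint h
    omega
  rw [Submodule.disjoint_def] at hnd
  push Not at hnd
  obtain ⟨x, hxV, hxL, hx⟩ := hnd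
  refine ⟨x, hx, hxL, fun i hki => ?_⟩
  obtain ⟨c, rfl⟩ := (Submodule.mem_span_range_iff_exists_fun ℝ).1 hxV
  simp only [inner_sum, inner_smul_right]
  refine Finset.sum_eq_zero fun j _ => ?_
  rw [Function.comp_apply, b.inner_eq_zero, mul_zero]
  rintro rfl
  simp only [Fin.val_castLE] at hki
  omega

/-- Courant–Fischer: some `x ≠ 0` with `L x = 0` lies in the span of the top `k + 1` eigenvectors
of `T† T`, and there `‖T x‖ ≥ σ_k ‖x‖`. -/
theorem singularValues_le_norm_sub [FiniteDimensional ℝ F] (T L : E →L[ℝ] F) {k : ℕ}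
    (hL : finrank ℝ (LinearMap.range (L : E →ₗ[ℝ] F)) ≤ k) :
    (T : E →ₗ[ℝ] F).singularValues k ≤ ‖T - L‖ := by
  rcases le_or_gt (finrank ℝ E) k with hEk | hkE
  · rw [LinearMap.singularValues_of_finrank_le _ hEk]
    exact norm_nonneg _
  have hf := (T : E →ₗ[ℝ] F).isSymmetric_adjoint_comp_self
  obtain ⟨x, hx0, hLx, hx⟩ :=
    (hf.eigenvectorBasis rfl).exists_ne_zero_mem_ker_inner_eq_zero (L : E →ₗ[ℝ] F) hL hkE
  have hTx : (T : E →ₗ[ℝ] F).singularValues k ^ 2 * ‖x‖ ^ 2 ≤ ‖(T - L) x‖ ^ 2 := by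
    rw [LinearMap.sq_singularValues_of_lt _ rfl hkE]
    refine (hf.eigenvalues_mul_norm_sq_le_inner rfl (k := ⟨k, hkE⟩) hx).trans_eq ?_
    simp [LinearMap.adjoint_inner_right, show L x = 0 from hLx]
  have hsq : ((T : E →ₗ[ℝ] F).singularValues k * ‖x‖) ^ 2 ≤ (‖T - L‖ * ‖x‖) ^ 2 := by
    rw [mul_pow]
    exact hTx.trans (pow_le_pow_left₀ (norm_nonneg _) ((T - L).le_opNorm x) 2)
  exact le_of_mul_le_mul_right (le_of_pow_le_pow_left₀ two_ne_zero (by positivity) hsq)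
    (norm_pos_iff.2 hx0)

theorem singularValues_le_approxNumber [FiniteDimensional ℝ F] (T : E →L[ℝ] F) (k : ℕ) :
    (T : E →ₗ[ℝ] F).singularValues k ≤ approxNumber (k + 1) T :=
  le_approxNumber k.succ_ne_zero fun L hL => singularValues_le_norm_sub T L <| by
    rw [LinearMap.rank, ← finrank_eq_rank] at hL
    exact Nat.lt_succ_iff.1 (by exact_mod_cast hL)

theorem abs_det_le_prod_approxNumber (T : E →L[ℝ] E) :
    |LinearMap.det (T : E →ₗ[ℝ] E)| ≤
      ∏ k ∈ Finset.range (finrank ℝ E), approxNumber (k + 1) T := by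
  rw [← LinearMap.normDet_eq_abs_det, LinearMap.normDet_eq_prod_singularValues]
  exact Finset.prod_le_prod (fun k _ => LinearMap.singularValues_nonneg _ k)
    fun k _ => singularValues_le_approxNumber T k

end SingularValues

section GelfandNumbers

variable {X Y : Type*} [NormedAddCommGroup X] [NormedSpace ℝ X]
  [NormedAddCommGroup Y] [NormedSpace ℝ Y] {n : ℕ}

theorem gelfandNumber_le (S : X →L[ℝ] Y) (M : Submodule ℝ X) (hM : IsClosed (M : Set X))
    (hcodim : Module.rank ℝ (X ⧸ M) < n) : gelfandNumber n S ≤ ‖S ∘L M.subtypeL‖ :=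
  csInf_le ⟨0, fun _ ⟨_, _, _, hr⟩ => hr ▸ by positivity⟩ ⟨M, hM, hcodim, rfl⟩

theorem rank_quotient_ker_le_finrank {F : Type*} [AddCommGroup F] [Module ℝ F]
    [FiniteDimensional ℝ F] (φ : X →ₗ[ℝ] F) :
    Module.rank ℝ (X ⧸ LinearMap.ker φ) ≤ Module.finrank ℝ F := by
  have e := φ.quotKerEquivRange
  have : FiniteDimensional ℝ (X ⧸ LinearMap.ker φ) := Module.Finite.equiv e.symm
  rw [← Module.finrank_eq_rank, e.finrank_eq]
  exact_mod_cast Submodule.finrank_le _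

theorem exists_norm_lt_one_lt_norm_apply_of_lt_gelfandNumber {m : ℕ} (hmn : m < n)
    (S : X →L[ℝ] Y) (g : Fin m → StrongDual ℝ Y) {t : ℝ} (ht : t < gelfandNumber n S) :
    ∃ x : X, ‖x‖ < 1 ∧ t < ‖S x‖ ∧ ∀ i, g i (S x) = 0 := by
  set φ : X →L[ℝ] (Fin m → ℝ) := ContinuousLinearMap.pi fun i => g i ∘L S
  set M := LinearMap.ker (φ : X →ₗ[ℝ] Fin m → ℝ)
  have hcodim : Module.rank ℝ (X ⧸ M) < n :=
    (rank_quotient_ker_le_finrank _).trans_lt (by simpa using hmn)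
  obtain ⟨⟨x, hxM⟩, hx, htx⟩ := (S ∘L M.subtypeL).exists_lt_apply_of_lt_opNorm
    (ht.trans_le (gelfandNumber_le S M φ.isClosed_ker hcodim))
  exact ⟨x, hx, htx, fun i => congr_fun hxM i⟩

theorem exists_triangular_norming_system (S : X →L[ℝ] Y) {t : ℝ} (ht : t < gelfandNumber n S) :
    ∀ m ≤ n, ∃ (x : Fin m → X) (b : Fin m → StrongDual ℝ Y), (∀ j, ‖x j‖ ≤ 1) ∧
      (∀ j, ‖b j‖ ≤ 1) ∧ (∀ j, t ≤ b j (S (x j))) ∧ ∀ i j, i < j → b i (S (x j)) = 0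
  | 0, _ => ⟨Fin.elim0, Fin.elim0, by simp⟩
  | m + 1, hm => by
    obtain ⟨x, b, hx, hb, hdiag, htri⟩ := exists_triangular_norming_system S ht m (by omega)
    obtain ⟨y, hy, hty, hby⟩ := exists_norm_lt_one_lt_norm_apply_of_lt_gelfandNumber hm S b ht
    obtain ⟨c, hc, hcy⟩ := exists_dual_vector'' ℝ (S y)
    refine ⟨Fin.snoc x y, Fin.snoc b c, ?_, ?_, ?_, ?_⟩ <;>
      simp only [Fin.forall_fin_succ', Fin.snoc_castSucc, Fin.snoc_last]
    · exact ⟨hx, hy.le⟩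
    · exact ⟨hb, hc⟩
    · exact ⟨hdiag, hcy ▸ hty.le⟩
    · refine ⟨fun i => ⟨fun j hij => htri i j (by simpa using hij), fun _ => hby i⟩, ?_⟩
      simp [(Fin.castSucc_lt_last _).not_gt]

end GelfandNumbers

section AnalysisSynthesis

variable {X Y : Type*} [NormedAddCommGroup X] [NormedSpace ℝ X]
  [NormedAddCommGroup Y] [NormedSpace ℝ Y] {ι : Type*}

noncomputable def synthesisCLM [Fintype ι] (x : ι → X) : EuclideanSpace ℝ ι →L[ℝ] X :=
  ∑ j, (EuclideanSpace.proj j).smulRight (x j)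

noncomputable def analysisCLM (b : ι → StrongDual ℝ Y) : Y →L[ℝ] EuclideanSpace ℝ ι :=
  (EuclideanSpace.equiv ι ℝ).symm.toContinuousLinearMap ∘L ContinuousLinearMap.pi b

@[simp]
theorem synthesisCLM_apply [Fintype ι] (x : ι → X) (v : EuclideanSpace ℝ ι) :
    synthesisCLM x v = ∑ j, v j • x j := by
  simp [synthesisCLM]

@[simp]
theorem analysisCLM_apply (b : ι → StrongDual ℝ Y) (y : Y) (i : ι) : analysisCLM b y i = b i y :=
  rfl

theorem EuclideanSpace.sum_abs_le_sqrt_card_mul_norm [Fintype ι] (v : EuclideanSpace ℝ ι) :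
    ∑ j, |v j| ≤ √(Fintype.card ι) * ‖v‖ := by
  refine le_of_pow_le_pow_left₀ two_ne_zero (by positivity) ?_
  rw [mul_pow, Real.sq_sqrt (Nat.cast_nonneg _), EuclideanSpace.real_norm_sq_eq]
  simpa using sq_sum_le_card_mul_sum_sq (s := Finset.univ) (f := fun j => |v j|)

theorem norm_synthesisCLM_le [Fintype ι] {x : ι → X} (hx : ∀ j, ‖x j‖ ≤ 1) :
    ‖synthesisCLM x‖ ≤ √(Fintype.card ι) := by
  refine ContinuousLinearMap.opNorm_le_bound _ (by positivity) fun v => ?_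
  calc ‖synthesisCLM x v‖ ≤ ∑ j, ‖v j • x j‖ := by simpa using norm_sum_le _ _
    _ ≤ ∑ j, |v j| := Finset.sum_le_sum fun j _ => by
        rw [norm_smul, Real.norm_eq_abs]
        exact mul_le_of_le_one_right (abs_nonneg _) (hx j)
    _ ≤ √(Fintype.card ι) * ‖v‖ := v.sum_abs_le_sqrt_card_mul_norm

theorem norm_analysisCLM_le [Fintype ι] {b : ι → StrongDual ℝ Y} (hb : ∀ i, ‖b i‖ ≤ 1) :
    ‖analysisCLM b‖ ≤ √(Fintype.card ι) := by
  refine ContinuousLinearMap.opNorm_le_bound _ (by positivity) fun y => ?_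
  refine le_of_pow_le_pow_left₀ two_ne_zero (by positivity) ?_
  rw [mul_pow, Real.sq_sqrt (Nat.cast_nonneg _), EuclideanSpace.real_norm_sq_eq]
  calc ∑ i, analysisCLM b y i ^ 2 ≤ ∑ _i : ι, ‖y‖ ^ 2 := Finset.sum_le_sum fun i _ => by
        rw [analysisCLM_apply, ← sq_abs]
        gcongr
        simpa using (b i).le_of_opNorm_le (hb i) y
    _ = Fintype.card ι * ‖y‖ ^ 2 := by simp

theorem det_analysisCLM_comp_synthesisCLM [Fintype ι] [LinearOrder ι] (S : X →L[ℝ] Y)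
    (x : ι → X) (b : ι → StrongDual ℝ Y) (htri : ∀ i j, i < j → b i (S (x j)) = 0) :
    LinearMap.det ((analysisCLM b ∘L S ∘L synthesisCLM x : EuclideanSpace ℝ ι →L[ℝ] _) :
      EuclideanSpace ℝ ι →ₗ[ℝ] EuclideanSpace ℝ ι) = ∏ j, b j (S (x j)) := by
  set e := (EuclideanSpace.basisFun ι ℝ).toBasis
  have hM : LinearMap.toMatrix e e
      (analysisCLM b ∘L S ∘L synthesisCLM x : EuclideanSpace ℝ ι →L[ℝ] _) =
        Matrix.of fun i j => b i (S (x j)) := by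
    ext i j
    simp [e, LinearMap.toMatrix_apply]
  rw [← LinearMap.det_toMatrix e, hM, Matrix.det_of_isLowerTriangular]
  · simp
  · exact htri

end AnalysisSynthesis

theorem pow_le_pow_mul_prod_hilbertNumber {X Y : Type*} [NormedAddCommGroup X]
    [NormedSpace ℝ X] [NormedAddCommGroup Y] [NormedSpace ℝ Y] (S : X →L[ℝ] Y) {n : ℕ}
    {x : Fin n → X} {b : Fin n → StrongDual ℝ Y} {t : ℝ} (ht : 0 ≤ t) (hx : ∀ j, ‖x j‖ ≤ 1)
    (hb : ∀ i, ‖b i‖ ≤ 1) (hdiag : ∀ j, t ≤ b j (S (x j)))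
    (htri : ∀ i j, i < j → b i (S (x j)) = 0) :
    t ^ n ≤ (n : ℝ) ^ n * ∏ k ∈ Finset.Icc 1 n, hilbertNumber k S := by
  set T := analysisCLM b ∘L S ∘L synthesisCLM x
  have hBA : ‖analysisCLM b‖ * ‖synthesisCLM x‖ ≤ n := by
    have hB := norm_analysisCLM_le hb
    have hA := norm_synthesisCLM_le hx
    rw [Fintype.card_fin] at hA hB
    calc _ ≤ √n * √n := mul_le_mul hB hA (norm_nonneg _) (by positivity)
      _ = n := Real.mul_self_sqrt (Nat.cast_nonneg n)
  have hT (k : ℕ) : approxNumber (k + 1) T ≤ n * hilbertNumber (k + 1) S := by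
    refine (approxNumber_comp_le_hilbertNumber_mul_of_finiteDimensional k.succ_ne_zero S _ _).trans
      ?_
    rw [mul_comm]
    have := hilbertNumber_nonneg (k + 1) S
    gcongr
  calc t ^ n = ∏ _j : Fin n, t := by simp
    _ ≤ ∏ j, b j (S (x j)) := Finset.prod_le_prod (fun _ _ => ht) fun j _ => hdiag j
    _ = LinearMap.det (T : EuclideanSpace ℝ (Fin n) →ₗ[ℝ] EuclideanSpace ℝ (Fin n)) :=
        (det_analysisCLM_comp_synthesisCLM S x b htri).symm
    _ ≤ ∏ k ∈ Finset.range n, approxNumber (k + 1) T := by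
        have := abs_det_le_prod_approxNumber T
        rw [finrank_euclideanSpace_fin] at this
        exact (le_abs_self _).trans this
    _ ≤ ∏ k ∈ Finset.range n, (n * hilbertNumber (k + 1) S) :=
        Finset.prod_le_prod (fun k _ => approxNumber_nonneg _ _) fun k _ => hT k
    _ = n ^ n * ∏ k ∈ Finset.Icc 1 n, hilbertNumber k S := by
        rw [Finset.prod_mul_distrib, Finset.prod_const, Finset.card_range, Finset.range_eq_Ico,
          Finset.prod_Ico_add' (hilbertNumber · S), ← Finset.Ico_add_one_right_eq_Icc, zero_add]

theorem le_mul_rpow_one_div_of_pow_le {t a P : ℝ} {n : ℕ} (hn : n ≠ 0) (ht : 0 ≤ t)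
    (ha : 0 ≤ a) (hP : 0 ≤ P) (h : t ^ n ≤ a ^ n * P) : t ≤ a * P ^ ((1 : ℝ) / n) := by
  rw [one_div]
  calc t = (t ^ n) ^ (n⁻¹ : ℝ) := (Real.pow_rpow_inv_natCast ht hn).symm
    _ ≤ (a ^ n * P) ^ (n⁻¹ : ℝ) := by gcongr
    _ = a * P ^ (n⁻¹ : ℝ) := by
        rw [Real.mul_rpow (by positivity) hP, Real.pow_rpow_inv_natCast ha hn]

theorem gelfand_le_n_mul_geom_mean_hilbert_general
    {X Y : Type*} [NormedAddCommGroup X] [NormedSpace ℝ X]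
    [NormedAddCommGroup Y] [NormedSpace ℝ Y]
    (S : X →L[ℝ] Y) (n : ℕ) (hn : 1 ≤ n) :
    gelfandNumber n S ≤
      (n : ℝ) * (∏ k ∈ Finset.Icc 1 n, hilbertNumber k S) ^ ((1 : ℝ) / n) := by
  have hP : 0 ≤ ∏ k ∈ Finset.Icc 1 n, hilbertNumber k S :=
    Finset.prod_nonneg fun k _ => hilbertNumber_nonneg k S
  refine le_of_forall_lt_imp_le_of_dense fun t ht => ?_
  rcases le_or_gt t 0 with ht0 | ht0
  · exact ht0.trans (by positivity)
  obtain ⟨x, b, hx, hb, hdiag, htri⟩ := exists_triangular_norming_system S ht n le_rfl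
  exact le_mul_rpow_one_div_of_pow_le (by omega) ht0.le (Nat.cast_nonneg n) hP
    (pow_le_pow_mul_prod_hilbertNumber S ht0.le hx hb hdiag htri)

theorem gelfand_le_n_mul_geom_mean_hilbert
    {X Y : Type*} [NormedAddCommGroup X] [NormedSpace ℝ X] [CompleteSpace X]
    [NormedAddCommGroup Y] [NormedSpace ℝ Y] [CompleteSpace Y]
    (S : X →L[ℝ] Y) (n : ℕ) (hn : 1 ≤ n) :
    gelfandNumber n S ≤
      (n : ℝ) * (∏ k ∈ Finset.Icc 1 n, hilbertNumber k S) ^ ((1 : ℝ) / n) :=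
  gelfand_le_n_mul_geom_mean_hilbert_general S n hn
end

section
/- Let s be an s-number sequence, i.e., an assignment to every bounded linear operator S between real Banach spaces of a sequence (s_n(S))_{n≥1} of nonnegative reals satisfying axioms (S1)–(S5), and assume additionally that s_n(S) = a_n(S) for every bounded linear operator S : ℓ₂ → ℓ₂. Then for every bounded linear operator S : X → Y between real Banach spaces and every n ≥ 1, h_n(S) ≤ s_n(S), where h_n are the Hilbert numbers. -/
/-- An s-number sequence (in the sense of Pietsch): an assignment, to every bounded linear
operator between real Banach spaces, of a sequence of nonnegative reals (indexed by `n ≥ 1`)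
satisfying (S1)-(S5). -/
structure SNumberSequence where
  /-- `s S n` is the n-th s-number of the operator `S` (relevant for `n ≥ 1`). -/
  s : ∀ {X Y : Type} [NormedAddCommGroup X] [NormedSpace ℝ X] [CompleteSpace X]
      [NormedAddCommGroup Y] [NormedSpace ℝ Y] [CompleteSpace Y],
      (X →L[ℝ] Y) → ℕ → ℝ
  /-- (S1): nonnegativity. -/
  nonneg : ∀ {X Y : Type} [NormedAddCommGroup X] [NormedSpace ℝ X] [CompleteSpace X]
      [NormedAddCommGroup Y] [NormedSpace ℝ Y] [CompleteSpace Y]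
      (S : X →L[ℝ] Y) (n : ℕ), 1 ≤ n → 0 ≤ s S n
  /-- (S1): the first s-number is the operator norm. -/
  first_eq_norm : ∀ {X Y : Type} [NormedAddCommGroup X] [NormedSpace ℝ X] [CompleteSpace X]
      [NormedAddCommGroup Y] [NormedSpace ℝ Y] [CompleteSpace Y]
      (S : X →L[ℝ] Y), s S 1 = ‖S‖
  /-- (S1): monotonicity. -/
  antitone : ∀ {X Y : Type} [NormedAddCommGroup X] [NormedSpace ℝ X] [CompleteSpace X]
      [NormedAddCommGroup Y] [NormedSpace ℝ Y] [CompleteSpace Y]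
      (S : X →L[ℝ] Y) (n : ℕ), 1 ≤ n → s S (n + 1) ≤ s S n
  /-- (S2): additivity. -/
  add_le : ∀ {X Y : Type} [NormedAddCommGroup X] [NormedSpace ℝ X] [CompleteSpace X]
      [NormedAddCommGroup Y] [NormedSpace ℝ Y] [CompleteSpace Y]
      (S T : X →L[ℝ] Y) (n : ℕ), 1 ≤ n → s (S + T) n ≤ s S n + ‖T‖
  /-- (S3): the ideal property. -/
  comp_le : ∀ {W X Y Z : Type}
      [NormedAddCommGroup W] [NormedSpace ℝ W] [CompleteSpace W]
      [NormedAddCommGroup X] [NormedSpace ℝ X] [CompleteSpace X]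
      [NormedAddCommGroup Y] [NormedSpace ℝ Y] [CompleteSpace Y]
      [NormedAddCommGroup Z] [NormedSpace ℝ Z] [CompleteSpace Z]
      (A : W →L[ℝ] X) (S : X →L[ℝ] Y) (B : Y →L[ℝ] Z) (n : ℕ), 1 ≤ n →
      s (B.comp (S.comp A)) n ≤ ‖B‖ * s S n * ‖A‖
  /-- (S4): normalization on the identity of n-dimensional Euclidean space. -/
  id_euclidean : ∀ n : ℕ, 1 ≤ n →
      s (ContinuousLinearMap.id ℝ (EuclideanSpace ℝ (Fin n))) n = 1
  /-- (S5): vanishing on operators of small rank. -/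
  rank_lt : ∀ {X Y : Type} [NormedAddCommGroup X] [NormedSpace ℝ X] [CompleteSpace X]
      [NormedAddCommGroup Y] [NormedSpace ℝ Y] [CompleteSpace Y]
      (S : X →L[ℝ] Y) (n : ℕ), 1 ≤ n → LinearMap.rank (S : X →ₗ[ℝ] Y) < n → s S n = 0

theorem hilbertNumber_le_of_approxNumber_comp_le {X Y : Type*} [NormedAddCommGroup X]
    [NormedSpace ℝ X] [NormedAddCommGroup Y] [NormedSpace ℝ Y] (S : X →L[ℝ] Y) (n : ℕ)
    {c : ℝ} (hc : 0 ≤ c)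
    (h : ∀ (A : Ell2 →L[ℝ] X) (B : Y →L[ℝ] Ell2),
      approxNumber n (B.comp (S.comp A)) ≤ ‖B‖ * c * ‖A‖) :
    hilbertNumber n S ≤ c := by
  refine Real.sSup_le ?_ hc
  rintro r ⟨A, B, hA, hB, rfl⟩
  have hBA : 0 < ‖B‖ * ‖A‖ := mul_pos (norm_pos_iff.mpr hB) (norm_pos_iff.mpr hA)
  rw [div_le_iff₀ hBA]
  exact (h A B).trans_eq (by ring)

theorem hilbertNumber_le_sNumber (σ : SNumberSequence)
    (hσ : ∀ (S : Ell2 →L[ℝ] Ell2) (n : ℕ), 1 ≤ n → σ.s S n = approxNumber n S)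
    {X Y : Type} [NormedAddCommGroup X] [NormedSpace ℝ X] [CompleteSpace X]
    [NormedAddCommGroup Y] [NormedSpace ℝ Y] [CompleteSpace Y]
    (S : X →L[ℝ] Y) (n : ℕ) (hn : 1 ≤ n) :
    hilbertNumber n S ≤ σ.s S n := by
  refine hilbertNumber_le_of_approxNumber_comp_le S n (σ.nonneg S n hn) fun A B => ?_
  rw [← hσ _ n hn]
  exact σ.comp_le A S B n hn
end

section
/- Let s be an s-number sequence, i.e., an assignment to every bounded linear operator S between real Banach spaces of a sequence (s_n(S))_{n≥1} of nonnegative reals satisfying axioms (S1)–(S5). Then for every compact bounded linear operator S : ℓ₂ → ℓ₂ and every n ≥ 1, s_n(S) = a_n(S), where a_n are the approximation numbers. -/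
/-!
The inequality `s_n(S) ≤ a_n(S)` holds for every operator: if `rank L < n`, then (S2) and (S5)
give `s_n(S) ≤ s_n(L) + ‖S - L‖ = ‖S - L‖`.

For the converse, choose greedily top singular vectors of the compact operator `S`, each an
eigenvector of `S†S` for its largest eigenvalue on the orthogonal complement of the previous ones.
This yields an `(n-1)`-dimensional `W`, an `n`-dimensional `W'` and a level `c` with
`‖S x‖ ≤ c ‖x‖` on `Wᗮ` and `c ‖x‖ ≤ ‖S x‖` on `W'`. The first bound gives
`a_n(S) ≤ ‖S - S P_W‖ ≤ c`. By the second, `S` is invertible on `W' ≅ ℓ₂ⁿ` with an inverse of norm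
at most `c⁻¹`, so the identity of `ℓ₂ⁿ` factors through `S` and (S3), (S4) give `c ≤ s_n(S)`.
-/

open Module
open scoped InnerProductSpace

theorem Ell2.not_finiteDimensional : ¬ FiniteDimensional ℝ Ell2 := fun _ =>
  Module.Finite.not_linearIndependent_of_infinite _
    (default : HilbertBasis ℕ ℝ Ell2).orthonormal.linearIndependent

open ContinuousLinearMap in
theorem IsCompactOperator.exists_norm_eq_one_inner_map_map {E F : Type*}
    [NormedAddCommGroup E] [InnerProductSpace ℝ E] [CompleteSpace E] [Nontrivial E]
    [NormedAddCommGroup F] [InnerProductSpace ℝ F] [CompleteSpace F]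
    {B : E →L[ℝ] F} (hB : IsCompactOperator B) :
    ∃ u : E, ‖u‖ = 1 ∧ ∀ z, ⟪B u, B z⟫_ℝ = ‖B‖ ^ 2 * ⟪u, z⟫_ℝ := by
  set T := adjoint B ∘L B
  suffices ∃ u : E, ‖u‖ = 1 ∧ T u = ‖T‖ • u by
    obtain ⟨u, hu, hTu⟩ := this
    refine ⟨u, hu, fun z => ?_⟩
    rw [← adjoint_inner_left, ← comp_apply, hTu, real_inner_smul_left, norm_adjoint_comp_self, sq]
  by_cases hT : T = 0
  · obtain ⟨u, hu⟩ := exists_norm_eq E zero_le_one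
    exact ⟨u, hu, by simp [hT]⟩
  have hTnorm : ‖T‖₊ ≠ 0 := nnnorm_ne_zero_iff.mpr hT
  have hTpos : T.IsPositive := isPositive_adjoint_comp_self B
  have hradius : spectralRadius ℝ T = ‖T‖₊ := T.spectralRadius_eq_nnnorm hTpos.isSelfAdjoint
  have hne : (spectrum ℝ T).Nonempty := by
    by_contra h
    rw [Set.not_nonempty_iff_eq_empty] at h
    simp only [spectralRadius, h, Set.mem_empty_iff_false, iSup_false, iSup_bot] at hradius
    exact hTnorm (ENNReal.coe_eq_zero.mp hradius.symm)
  -- A spectral value of modulus `‖T‖` is an eigenvalue (compactness), hence `‖T‖` (positivity).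
  obtain ⟨μ, hμ, hμnorm⟩ := spectrum.exists_nnnorm_eq_spectralRadius_of_nonempty hne
  rw [hradius, ENNReal.coe_inj] at hμnorm
  have hμ0 : μ ≠ 0 := by rintro rfl; exact hTnorm (by simpa using hμnorm.symm)
  have hTc : IsCompactOperator T := hB.continuous_comp (adjoint B).continuous
  have heig := (hTc.hasEigenvalue_iff_mem_spectrum hμ0).mpr hμ
  have hμeq : μ = ‖T‖ := by
    rw [← abs_of_nonneg (eigenvalue_nonneg_of_nonneg heig hTpos.inner_nonneg_right),
      ← Real.norm_eq_abs, ← coe_nnnorm, hμnorm, coe_nnnorm]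
  obtain ⟨v, hv, hv0⟩ := heig.exists_hasEigenvector
  refine ⟨‖v‖⁻¹ • v, norm_smul_inv_norm hv0, ?_⟩
  have hTv : T v = μ • v := Module.End.mem_eigenspace_iff.mp hv
  rw [map_smul, ← hμeq, hTv, smul_comm]

theorem ContinuousLinearMap.exists_comp_eq_id_of_mul_norm_le {V Y : Type*}
    [NormedAddCommGroup V] [NormedSpace ℝ V] [FiniteDimensional ℝ V]
    [NormedAddCommGroup Y] [InnerProductSpace ℝ Y]
    (F : V →L[ℝ] Y) {c : ℝ} (hc : 0 < c) (hF : ∀ v, c * ‖v‖ ≤ ‖F v‖) :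
    ∃ B : Y →L[ℝ] V, B ∘L F = .id ℝ V ∧ ‖B‖ ≤ c⁻¹ := by
  have hinj : Function.Injective F := by
    refine (injective_iff_map_eq_zero F).mpr fun v hv => ?_
    have := hF v
    rw [hv, norm_zero] at this
    exact norm_le_zero_iff.mp (nonpos_of_mul_nonpos_right this hc)
  set R := LinearMap.range (F : V →ₗ[ℝ] Y)
  set e : V ≃ₗ[ℝ] R := LinearEquiv.ofInjective (F : V →ₗ[ℝ] Y) hinj
  have hFe : ∀ r : R, F (e.symm r) = r := fun r =>
    congrArg Subtype.val (e.apply_symm_apply r)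
  refine ⟨LinearMap.toContinuousLinearMap (e.symm : R →ₗ[ℝ] V) ∘L R.orthogonalProjectionOnto,
    ?_, ?_⟩
  · ext v
    have : R.orthogonalProjectionOnto (F v) = e v :=
      R.orthogonalProjectionOnto_mem_subspace_eq_self (e v)
    simp [this]
  · refine ContinuousLinearMap.opNorm_le_bound _ (inv_nonneg.mpr hc.le) fun y => ?_
    rw [inv_mul_eq_div, le_div_iff₀' hc]
    calc c * ‖e.symm (R.orthogonalProjectionOnto y)‖
        ≤ ‖(R.orthogonalProjectionOnto y : Y)‖ := by
          simpa only [hFe] using hF (e.symm (R.orthogonalProjectionOnto y))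
      _ ≤ ‖y‖ := R.norm_orthogonalProjectionOnto_apply_le y

namespace SNumberSequence

theorem le_s_of_mul_norm_le (σ : SNumberSequence) {X Y : Type}
    [NormedAddCommGroup X] [InnerProductSpace ℝ X] [CompleteSpace X]
    [NormedAddCommGroup Y] [InnerProductSpace ℝ Y] [CompleteSpace Y]
    (S : X →L[ℝ] Y) {E : Submodule ℝ X} {n : ℕ} (hn : 1 ≤ n) (hE : finrank ℝ E = n) {c : ℝ}
    (hSE : ∀ x ∈ E, c * ‖x‖ ≤ ‖S x‖) : c ≤ σ.s S n := by
  rcases le_or_gt c 0 with hc | hc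
  · exact hc.trans (σ.nonneg S n hn)
  have : FiniteDimensional ℝ E := Module.finite_of_finrank_pos (hE ▸ hn)
  set ι : EuclideanSpace ℝ (Fin n) →ₗᵢ[ℝ] X := E.subtypeₗᵢ.comp
    ((stdOrthonormalBasis ℝ E).reindex (finCongr hE)).repr.symm.toLinearIsometry
  set A := ι.toContinuousLinearMap
  obtain ⟨B, hBSA, hB⟩ := (S ∘L A).exists_comp_eq_id_of_mul_norm_le hc
    fun v => by simpa [A] using hSE (ι v) (Submodule.coe_mem _)
  have hA1 : ‖A‖ ≤ 1 := ι.norm_toContinuousLinearMap_le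
  have key : 1 ≤ c⁻¹ * σ.s S n := calc
    1 = σ.s (B ∘L (S ∘L A)) n := by rw [hBSA, σ.id_euclidean n hn]
    _ ≤ ‖B‖ * σ.s S n * ‖A‖ := σ.comp_le A S B n hn
    _ ≤ c⁻¹ * σ.s S n * 1 := by have := σ.nonneg S n hn; gcongr
    _ = c⁻¹ * σ.s S n := mul_one _
  rwa [inv_mul_eq_div, le_div_iff₀ hc, one_mul] at key

theorem s_le_approxNumber (σ : SNumberSequence) {X Y : Type}
    [NormedAddCommGroup X] [NormedSpace ℝ X] [CompleteSpace X]
    [NormedAddCommGroup Y] [NormedSpace ℝ Y] [CompleteSpace Y]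
    (S : X →L[ℝ] Y) {n : ℕ} (hn : 1 ≤ n) : σ.s S n ≤ approxNumber n S := by
  refine le_csInf ⟨‖S - 0‖, 0, by simpa using zero_lt_one.trans_le hn, rfl⟩ ?_
  rintro _ ⟨L, hL, rfl⟩
  simpa [σ.rank_lt L n hn hL] using σ.add_le L (S - L) n hn

end SNumberSequence

theorem approxNumber_le_of_norm_map_le {H Y : Type*}
    [NormedAddCommGroup H] [InnerProductSpace ℝ H] [NormedAddCommGroup Y] [NormedSpace ℝ Y]
    (S : H →L[ℝ] Y) (W : Submodule ℝ H) [FiniteDimensional ℝ W] {n : ℕ} (hW : finrank ℝ W < n)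
    {c : ℝ} (hc : 0 ≤ c) (hSW : ∀ x ∈ Wᗮ, ‖S x‖ ≤ c * ‖x‖) : approxNumber n S ≤ c := by
  set L := (S ∘L W.subtypeL) ∘L W.orthogonalProjectionOnto
  have hrank : LinearMap.rank (L : H →ₗ[ℝ] Y) < n := calc
    LinearMap.rank (L : H →ₗ[ℝ] Y) ≤ LinearMap.rank (S ∘L W.subtypeL : W →ₗ[ℝ] Y) :=
      LinearMap.rank_comp_le_left _ _
    _ = finrank ℝ (LinearMap.range (S ∘L W.subtypeL : W →ₗ[ℝ] Y)) := (finrank_eq_rank _ _).symm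
    _ < n := by exact_mod_cast (LinearMap.finrank_range_le _).trans_lt hW
  have hnorm : ‖S - L‖ ≤ c := by
    refine ContinuousLinearMap.opNorm_le_bound _ hc fun x => ?_
    have hx : (S - L) x = S (Wᗮ.starProjection x) := by simp [L, map_sub]
    rw [hx]
    exact (hSW _ (Wᗮ.starProjection_apply_mem x)).trans
      (mul_le_mul_of_nonneg_left (Wᗮ.norm_starProjection_apply_le x) hc)
  refine csInf_le_of_le ⟨0, ?_⟩ ⟨L, hrank, rfl⟩ hnorm
  rintro _ ⟨L, -, rfl⟩
  exact norm_nonneg _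

theorem Submodule.finrank_sup_span_singleton_of_notMem {K V : Type*} [DivisionRing K]
    [AddCommGroup V] [Module K V] {p : Submodule K V} [FiniteDimensional K p] {v : V}
    (hv : v ∉ p) : finrank K (p ⊔ K ∙ v : Submodule K V) = finrank K p + 1 := by
  have hv0 : v ≠ 0 := fun h => hv (h ▸ p.zero_mem)
  rw [← Nat.add_right_cancel_iff, Submodule.finrank_sup_add_finrank_inf_eq,
    finrank_span_singleton hv0, (Submodule.disjoint_span_singleton_of_notMem hv).eq_bot,
    finrank_bot, add_zero]

section SingularSubspace

variable {H Y : Type*} [NormedAddCommGroup H] [InnerProductSpace ℝ H]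
  [NormedAddCommGroup Y] [InnerProductSpace ℝ Y]

/-- `S` maps `W` and `Wᗮ` to orthogonal subspaces, and `c` separates the singular values of `S`
on `W` (all `≥ c`) from those on `Wᗮ` (all `≤ c`). -/
structure IsSingularSubspace (S : H →L[ℝ] Y) (W : Submodule ℝ H) (c : ℝ) : Prop where
  nonneg : 0 ≤ c
  inner_map_map_eq_zero : ∀ w ∈ W, ∀ x ∈ Wᗮ, ⟪S w, S x⟫_ℝ = 0
  mul_norm_le : ∀ x ∈ W, c * ‖x‖ ≤ ‖S x‖
  norm_map_le : ∀ x ∈ Wᗮ, ‖S x‖ ≤ c * ‖x‖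

theorem isSingularSubspace_bot (S : H →L[ℝ] Y) : IsSingularSubspace S ⊥ ‖S‖ where
  nonneg := norm_nonneg S
  inner_map_map_eq_zero w hw _ _ := by simp [(Submodule.mem_bot ℝ).mp hw]
  mul_norm_le x hx := by simp [(Submodule.mem_bot ℝ).mp hx]
  norm_map_le x _ := S.le_opNorm x

theorem IsSingularSubspace.sup_span_singleton {S : H →L[ℝ] Y} {W : Submodule ℝ H} {c : ℝ}
    (hW : IsSingularSubspace S W c) {u : H} (hu : u ∈ Wᗮ) (hu1 : ‖u‖ = 1) {c' : ℝ}
    (hc' : 0 ≤ c') (hSu : ∀ x ∈ Wᗮ, ⟪S u, S x⟫_ℝ = c' ^ 2 * ⟪u, x⟫_ℝ)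
    (hSW : ∀ x ∈ Wᗮ, ‖S x‖ ≤ c' * ‖x‖) : IsSingularSubspace S (W ⊔ ℝ ∙ u) c' := by
  have hSu_norm : ‖S u‖ = c' := by
    have := hSu u hu
    rw [real_inner_self_eq_norm_sq, real_inner_self_eq_norm_sq, hu1, one_pow, mul_one] at this
    exact (pow_left_inj₀ (norm_nonneg _) hc' two_ne_zero).mp this
  have hc'c : c' ≤ c := by simpa [hSu_norm, hu1] using hW.norm_map_le u hu
  have horth : (W ⊔ ℝ ∙ u)ᗮ = Wᗮ ⊓ (ℝ ∙ u)ᗮ := (Submodule.inf_orthogonal _ _).symm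
  refine ⟨hc', ?_, ?_, fun x hx => hSW x (horth ▸ hx).1⟩
  · rintro _ hw' x hx
    obtain ⟨w, hw, _, hv, rfl⟩ := Submodule.mem_sup.mp hw'
    obtain ⟨t, rfl⟩ := Submodule.mem_span_singleton.mp hv
    rw [horth] at hx
    have hux : ⟪u, x⟫_ℝ = 0 := Submodule.mem_orthogonal_singleton_iff_inner_right.mp hx.2
    rw [map_add, map_smul, inner_add_left, real_inner_smul_left,
      hW.inner_map_map_eq_zero w hw x hx.1, hSu x hx.1, hux]
    ring
  · rintro _ hw'
    obtain ⟨w, hw, _, hv, rfl⟩ := Submodule.mem_sup.mp hw'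
    obtain ⟨t, rfl⟩ := Submodule.mem_span_singleton.mp hv
    have hSw : c' ^ 2 * ‖w‖ ^ 2 ≤ ‖S w‖ ^ 2 := by
      rw [← mul_pow]
      exact pow_le_pow_left₀ (by positivity)
        ((mul_le_mul_of_nonneg_right hc'c (norm_nonneg w)).trans (hW.mul_norm_le w hw)) 2
    have hnorm : ‖w + t • u‖ ^ 2 = ‖w‖ ^ 2 + t ^ 2 := by
      rw [norm_add_sq_real, real_inner_smul_right, Submodule.inner_right_of_mem_orthogonal hw hu,
        norm_smul, hu1, Real.norm_eq_abs, mul_one, sq_abs]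
      ring
    have hSnorm : ‖S (w + t • u)‖ ^ 2 = ‖S w‖ ^ 2 + t ^ 2 * c' ^ 2 := by
      rw [map_add, map_smul, norm_add_sq_real, real_inner_smul_right,
        hW.inner_map_map_eq_zero w hw u hu, norm_smul, hSu_norm, Real.norm_eq_abs, mul_pow, sq_abs]
      ring
    refine (pow_le_pow_iff_left₀ (by positivity) (norm_nonneg _) two_ne_zero).mp ?_
    rw [mul_pow, hnorm, hSnorm]
    nlinarith

theorem IsSingularSubspace.exists_finrank_succ [CompleteSpace H] [CompleteSpace Y]
    {S : H →L[ℝ] Y} (hS : IsCompactOperator S) (hH : ¬ FiniteDimensional ℝ H)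
    {W : Submodule ℝ H} [FiniteDimensional ℝ W] {c : ℝ} (hW : IsSingularSubspace S W c) :
    ∃ (W' : Submodule ℝ H) (c' : ℝ), FiniteDimensional ℝ W' ∧ finrank ℝ W' = finrank ℝ W + 1 ∧
      IsSingularSubspace S W' c' ∧ ∀ x ∈ Wᗮ, ‖S x‖ ≤ c' * ‖x‖ := by
  have : CompleteSpace Wᗮ := (Submodule.isClosed_orthogonal W).completeSpace_coe
  have : Nontrivial Wᗮ := by
    refine Submodule.nontrivial_iff_ne_bot.mpr fun h => hH ?_
    rw [Submodule.orthogonal_eq_bot_iff] at h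
    exact Module.Finite.equiv (h ▸ Submodule.topEquiv)
  set B := S ∘L Wᗮ.subtypeL
  obtain ⟨u, hu1, hBu⟩ := (hS.comp_clm Wᗮ.subtypeL).exists_norm_eq_one_inner_map_map (B := B)
  have hSW : ∀ x ∈ Wᗮ, ‖S x‖ ≤ ‖B‖ * ‖x‖ := fun x hx => B.le_opNorm ⟨x, hx⟩
  have huW : (u : H) ∉ W := fun huW => by
    have : u = 0 := by simpa using Submodule.disjoint_def.mp W.orthogonal_disjoint u huW u.2
    simp [this] at hu1
  refine ⟨W ⊔ ℝ ∙ (u : H), ‖B‖, inferInstance, Submodule.finrank_sup_span_singleton_of_notMem huW,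
    hW.sup_span_singleton u.2 hu1 (norm_nonneg B) (fun x hx => hBu ⟨x, hx⟩) hSW, hSW⟩

theorem exists_isSingularSubspace_finrank_eq [CompleteSpace H] [CompleteSpace Y]
    {S : H →L[ℝ] Y} (hS : IsCompactOperator S) (hH : ¬ FiniteDimensional ℝ H) (m : ℕ) :
    ∃ (W : Submodule ℝ H) (c : ℝ), FiniteDimensional ℝ W ∧ finrank ℝ W = m ∧
      IsSingularSubspace S W c := by
  induction m with
  | zero => exact ⟨⊥, ‖S‖, inferInstance, finrank_bot ℝ H, isSingularSubspace_bot S⟩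
  | succ m ih =>
    obtain ⟨W, c, _, rfl, hW⟩ := ih
    obtain ⟨W', c', hW'fin, hW'rank, hW', -⟩ := hW.exists_finrank_succ hS hH
    exact ⟨W', c', hW'fin, hW'rank, hW'⟩

end SingularSubspace

theorem sNumber_eq_approxNumber_of_compact (σ : SNumberSequence)
    (S : Ell2 →L[ℝ] Ell2) (hS : IsCompactOperator S) (n : ℕ) (hn : 1 ≤ n) :
    σ.s S n = approxNumber n S := by
  refine le_antisymm (σ.s_le_approxNumber S hn) ?_
  obtain ⟨W, c, _, hWrank, hW⟩ :=
    exists_isSingularSubspace_finrank_eq hS Ell2.not_finiteDimensional (n - 1)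
  obtain ⟨W', c', _, hW'rank, hW', hSW⟩ := hW.exists_finrank_succ hS Ell2.not_finiteDimensional
  calc approxNumber n S ≤ c' := approxNumber_le_of_norm_map_le S W (by omega) hW'.nonneg hSW
    _ ≤ σ.s S n := σ.le_s_of_mul_norm_le S hn (by omega) hW'.mul_norm_le
end

section
/- Let X and Y be real Banach spaces, S : X → Y a bounded linear operator, n ≥ 1, and ε > 0. Then there exist x_1, …, x_n in the closed unit ball of X and b_1, …, b_n in the closed unit ball of the dual space Y' such that ⟨S x_k, b_j⟩ = 0 whenever j < k, and (1 + ε)·|⟨S x_k, b_k⟩| ≥ c_k(S) for all k = 1, …, n, where c_k are the Gelfand numbers. -/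
/-!
The vectors are chosen greedily. Once `b_1, …, b_{k-1}` are fixed, the closed subspace
`M = ⋂_{j<k} ker (b_j ∘ S)` has codimension at most `k - 1`, so `c_k(S) ≤ ‖S|_M‖`. Pick `x_k ∈ M`
in the unit ball with `‖S|_M‖ ≤ (1 + ε) ‖S x_k‖`, and let `b_k` be a norming functional of `S x_k`
(Hahn–Banach). Since `x_k ∈ M`, all earlier functionals vanish on `S x_k`.
-/

theorem Submodule.rank_quotient_iInf_ker_le {𝕜 E ι : Type*} [Field 𝕜] [AddCommGroup E]
    [Module 𝕜 E] [Fintype ι] (f : ι → Module.Dual 𝕜 E) :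
    Module.rank 𝕜 (E ⧸ ⨅ i, LinearMap.ker (f i)) ≤ Fintype.card ι := by
  rw [← LinearMap.ker_pi]
  have := LinearMap.lift_rank_le_of_injective _
    (LinearMap.ker_eq_bot.mp (Submodule.ker_liftQ_eq_bot' _ (LinearMap.pi f) rfl))
  simpa [rank_fun'] using this

theorem ContinuousLinearMap.exists_norm_le_one_opNorm_le_mul_norm_apply {𝕜 E F : Type*}
    [DenselyNormedField 𝕜] [NormedAddCommGroup E] [SeminormedAddCommGroup F]
    [NormedSpace 𝕜 E] [NormedSpace 𝕜 F] (f : E →L[𝕜] F) {ε : ℝ} (hε : 0 < ε) :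
    ∃ x : E, ‖x‖ ≤ 1 ∧ ‖f‖ ≤ (1 + ε) * ‖f x‖ := by
  rcases (norm_nonneg f).eq_or_lt with hf | hf
  · exact ⟨0, by simp, by simp [← hf]⟩
  · have hlt : ‖f‖ / (1 + ε) < ‖f‖ := div_lt_self hf (lt_add_of_pos_right 1 hε)
    obtain ⟨x, hx, hfx⟩ := f.exists_lt_apply_of_lt_opNorm hlt
    exact ⟨x, hx.le, ((div_lt_iff₀' (by linarith)).mp hfx).le⟩

section Gelfand

variable {X Y : Type*} [NormedAddCommGroup X] [NormedSpace ℝ X]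
  [NormedAddCommGroup Y] [NormedSpace ℝ Y]

theorem gelfandNumber_le_opNorm_comp_subtypeL (S : X →L[ℝ] Y) {n : ℕ} {M : Submodule ℝ X}
    (hM : IsClosed (M : Set X)) (hcodim : Module.rank ℝ (X ⧸ M) < n) :
    gelfandNumber n S ≤ ‖S.comp M.subtypeL‖ := by
  refine csInf_le ⟨0, ?_⟩ ⟨M, hM, hcodim, rfl⟩
  rintro r ⟨N, -, -, rfl⟩
  positivity

theorem exists_norm_le_one_gelfandNumber_succ_le {k : ℕ} (S : X →L[ℝ] Y)
    (b : Fin k → Y →L[ℝ] ℝ) {ε : ℝ} (hε : 0 < ε) :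
    ∃ x : X, ‖x‖ ≤ 1 ∧ (∀ j, b j (S x) = 0) ∧ gelfandNumber (k + 1) S ≤ (1 + ε) * ‖S x‖ := by
  set M : Submodule ℝ X := ⨅ j, LinearMap.ker ((b j).comp S : X →ₗ[ℝ] ℝ)
  have hM : IsClosed (M : Set X) := by
    simpa only [M, Submodule.coe_iInf] using
      isClosed_iInter fun j => ((b j).comp S).isClosed_ker
  have hcodim : Module.rank ℝ (X ⧸ M) < (k + 1 : ℕ) :=
    (Submodule.rank_quotient_iInf_ker_le _).trans_lt (by simp)
  obtain ⟨m, hm, hSm⟩ := (S.comp M.subtypeL).exists_norm_le_one_opNorm_le_mul_norm_apply hε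
  refine ⟨m, hm, fun j => by simpa using (Submodule.mem_iInf _).mp m.2 j, ?_⟩
  exact (gelfandNumber_le_opNorm_comp_subtypeL S hM hcodim).trans hSm

theorem exists_triangular_system_step {k : ℕ} (S : X →L[ℝ] Y) (b : Fin k → Y →L[ℝ] ℝ) {ε : ℝ}
    (hε : 0 < ε) :
    ∃ (x : X) (g : Y →L[ℝ] ℝ), ‖x‖ ≤ 1 ∧ ‖g‖ ≤ 1 ∧ (∀ j, b j (S x) = 0) ∧
      gelfandNumber (k + 1) S ≤ (1 + ε) * |g (S x)| := by
  obtain ⟨x, hx, hbx, hc⟩ := exists_norm_le_one_gelfandNumber_succ_le S b hε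
  obtain ⟨g, hg, hgx⟩ := exists_dual_vector'' ℝ (S x)
  exact ⟨x, g, hx, hg, hbx, by simpa [hgx] using hc⟩

end Gelfand

theorem exists_triangular_system_gelfand_general
    {X Y : Type*} [NormedAddCommGroup X] [NormedSpace ℝ X]
    [NormedAddCommGroup Y] [NormedSpace ℝ Y]
    (S : X →L[ℝ] Y) (n : ℕ) (ε : ℝ) (hε : 0 < ε) :
    ∃ (x : Fin n → X) (b : Fin n → (Y →L[ℝ] ℝ)),
      (∀ k, ‖x k‖ ≤ 1) ∧ (∀ k, ‖b k‖ ≤ 1) ∧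
      (∀ j k : Fin n, j < k → b j (S (x k)) = 0) ∧
      (∀ k : Fin n, gelfandNumber ((k : ℕ) + 1) S ≤ (1 + ε) * |b k (S (x k))|) := by
  induction n with
  | zero => exact ⟨Fin.elim0, Fin.elim0, nofun, nofun, nofun, nofun⟩
  | succ n ih =>
    obtain ⟨x, b, hx, hb, htri, hc⟩ := ih
    obtain ⟨y, g, hy, hg, hby, hcy⟩ := exists_triangular_system_step S b hε
    refine ⟨Fin.snoc x y, Fin.snoc b g, ?_, ?_, ?_, ?_⟩ <;>
      simp only [Fin.forall_fin_succ', Fin.snoc_castSucc, Fin.snoc_last, Fin.val_castSucc,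
        Fin.val_last, Fin.castSucc_lt_castSucc_iff, Fin.castSucc_lt_last, lt_irrefl,
        (Fin.le_last _).not_gt, true_imp_iff, false_imp_iff, implies_true, and_true]
    · exact ⟨hx, hy⟩
    · exact ⟨hb, hg⟩
    · exact fun j => ⟨htri j, hby j⟩
    · exact ⟨hc, hcy⟩

theorem exists_triangular_system_gelfand
    {X Y : Type*} [NormedAddCommGroup X] [NormedSpace ℝ X] [CompleteSpace X]
    [NormedAddCommGroup Y] [NormedSpace ℝ Y] [CompleteSpace Y]
    (S : X →L[ℝ] Y) (n : ℕ) (hn : 1 ≤ n) (ε : ℝ) (hε : 0 < ε) :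
    ∃ (x : Fin n → X) (b : Fin n → (Y →L[ℝ] ℝ)),
      (∀ k, ‖x k‖ ≤ 1) ∧ (∀ k, ‖b k‖ ≤ 1) ∧
      (∀ j k : Fin n, j < k → b j (S (x k)) = 0) ∧
      (∀ k : Fin n, gelfandNumber ((k : ℕ) + 1) S ≤ (1 + ε) * |b k (S (x k))|) :=
  exists_triangular_system_gelfand_general S n ε hε
end

section
/- Let X and Y be real Banach spaces, S : X → Y a bounded linear operator, n ≥ 1, and ε > 0. Then there exist x_1, …, x_n in the closed unit ball of X and b_1, …, b_n in the closed unit ball of the dual space Y' such that ⟨S x_k, b_j⟩ = 0 whenever k < j, and (1 + ε)·|⟨S x_k, b_k⟩| ≥ d_k(S) for all k = 1, …, n, where d_k are the Kolmogorov numbers. -/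
/-!
The system is built greedily. Once `x₁, …, xₘ` are chosen, let `N` be the span of
`S x₁, …, S xₘ`, a subspace of dimension `< m + 1`, so `‖Q_N ∘ S‖ ≥ d_{m+1}(S)`. Pick `x` in
the unit ball with `(1 + ε) ‖Q_N (S x)‖ ≥ d_{m+1}(S)` and, by Hahn–Banach, a norming functional
`g` of `Y ⧸ N` at `Q_N (S x)`; then `b = g ∘ Q_N` has norm `≤ 1` and vanishes on `N`, which
gives the triangularity.
-/

section

variable {X Y : Type*} [NormedAddCommGroup X] [NormedSpace ℝ X]
  [NormedAddCommGroup Y] [NormedSpace ℝ Y]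

lemma norm_quotientCLM_le_one (N : Submodule ℝ Y) : ‖quotientCLM N‖ ≤ 1 :=
  LinearMap.mkContinuous_norm_le _ zero_le_one _

lemma quotientCLM_apply_eq_zero {N : Submodule ℝ Y} {y : Y} (hy : y ∈ N) :
    quotientCLM N y = 0 :=
  (Submodule.Quotient.mk_eq_zero N).mpr hy

lemma kolmogorovNumber_nonneg (n : ℕ) (S : X →L[ℝ] Y) : 0 ≤ kolmogorovNumber n S :=
  Real.sInf_nonneg fun _ ⟨_, _, hr⟩ => hr ▸ ContinuousLinearMap.opNorm_nonneg _

lemma kolmogorovNumber_le_norm_quotientCLM_comp (S : X →L[ℝ] Y) {n : ℕ}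
    (N : Submodule ℝ Y) (hN : Module.rank ℝ N < n) :
    kolmogorovNumber n S ≤ ‖(quotientCLM N).comp S‖ :=
  csInf_le ⟨0, fun _ ⟨_, _, hr⟩ => hr ▸ ContinuousLinearMap.opNorm_nonneg _⟩ ⟨N, hN, rfl⟩

open Cardinal in
lemma rank_span_range_lt_succ {K M : Type*} [DivisionRing K] [AddCommGroup M] [Module K M]
    {m : ℕ} (f : Fin m → M) : Module.rank K (Submodule.span K (Set.range f)) < (m + 1 : ℕ) := by
  refine (rank_span_le _).trans_lt ?_
  calc #(Set.range f) ≤ (m : Cardinal) := by simpa using Cardinal.mk_range_le_lift (f := f)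
    _ < (m + 1 : ℕ) := by exact_mod_cast m.lt_succ_self

lemma exists_annihilating_kolmogorovNumber_le (S : X →L[ℝ] Y) {ε : ℝ} (hε : 0 < ε)
    {n : ℕ} (N : Submodule ℝ Y) (hN : Module.rank ℝ N < n) :
    ∃ (x : X) (b : Y →L[ℝ] ℝ), ‖x‖ ≤ 1 ∧ ‖b‖ ≤ 1 ∧ (∀ y ∈ N, b y = 0) ∧
      kolmogorovNumber n S ≤ (1 + ε) * |b (S x)| := by
  rcases (kolmogorovNumber_nonneg n S).eq_or_lt with hd | hd
  · exact ⟨0, 0, by simp, by simp, fun _ _ => rfl, by simp [← hd]⟩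
  have hlt : kolmogorovNumber n S / (1 + ε) < ‖(quotientCLM N).comp S‖ :=
    (div_lt_self hd (by linarith)).trans_le (kolmogorovNumber_le_norm_quotientCLM_comp S N hN)
  obtain ⟨x, hx, hSx⟩ := ContinuousLinearMap.exists_lt_apply_of_lt_opNorm _ hlt
  obtain ⟨g, hg, hgSx⟩ := exists_dual_vector'' ℝ (quotientCLM N (S x))
  refine ⟨x, g.comp (quotientCLM N), hx.le, ?_, fun y hy => ?_, ?_⟩
  · exact (g.opNorm_comp_le _).trans
      (mul_le_one₀ hg (ContinuousLinearMap.opNorm_nonneg _) (norm_quotientCLM_le_one N))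
  · simp [quotientCLM_apply_eq_zero hy]
  · have hbSx : g.comp (quotientCLM N) (S x) = ‖quotientCLM N (S x)‖ := hgSx
    rw [hbSx, abs_of_nonneg (norm_nonneg _), ← div_le_iff₀' (by linarith)]
    exact hSx.le

def IsKolmogorovTriangular (S : X →L[ℝ] Y) (ε : ℝ) {m : ℕ} (x : Fin m → X)
    (b : Fin m → (Y →L[ℝ] ℝ)) : Prop :=
  (∀ k, ‖x k‖ ≤ 1) ∧ (∀ k, ‖b k‖ ≤ 1) ∧
    (∀ k j : Fin m, k < j → b j (S (x k)) = 0) ∧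
    (∀ k : Fin m, kolmogorovNumber ((k : ℕ) + 1) S ≤ (1 + ε) * |b k (S (x k))|)

lemma isKolmogorovTriangular_elim0 (S : X →L[ℝ] Y) (ε : ℝ) :
    IsKolmogorovTriangular S ε (Fin.elim0 : Fin 0 → X) Fin.elim0 :=
  ⟨fun k => k.elim0, fun k => k.elim0, fun k => k.elim0, fun k => k.elim0⟩

lemma IsKolmogorovTriangular.snoc {S : X →L[ℝ] Y} {ε : ℝ} {m : ℕ} {x : Fin m → X}
    {b : Fin m → (Y →L[ℝ] ℝ)} (h : IsKolmogorovTriangular S ε x b) {x' : X}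
    {b' : Y →L[ℝ] ℝ} (hx' : ‖x'‖ ≤ 1) (hb' : ‖b'‖ ≤ 1) (hb'x : ∀ i, b' (S (x i)) = 0)
    (hd : kolmogorovNumber (m + 1) S ≤ (1 + ε) * |b' (S x')|) :
    IsKolmogorovTriangular S ε (Fin.snoc x x' : Fin (m + 1) → X) (Fin.snoc b b') := by
  obtain ⟨hx, hb, htri, hdx⟩ := h
  refine ⟨Fin.forall_fin_succ'.mpr ⟨by simpa using hx, by simpa using hx'⟩,
    Fin.forall_fin_succ'.mpr ⟨by simpa using hb, by simpa using hb'⟩, ?_,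
    Fin.forall_fin_succ'.mpr ⟨by simpa using hdx, by simpa using hd⟩⟩
  intro k j hkj
  induction j using Fin.lastCases with
  | last =>
    obtain ⟨i, rfl⟩ := Fin.exists_castSucc_eq.mpr hkj.ne
    simpa using hb'x i
  | cast j =>
    obtain ⟨i, rfl⟩ := Fin.exists_castSucc_eq.mpr (hkj.trans (Fin.castSucc_lt_last j)).ne
    simpa using htri i j (Fin.castSucc_lt_castSucc_iff.mp hkj)

lemma exists_isKolmogorovTriangular (S : X →L[ℝ] Y) {ε : ℝ} (hε : 0 < ε) (m : ℕ) :
    ∃ (x : Fin m → X) (b : Fin m → (Y →L[ℝ] ℝ)), IsKolmogorovTriangular S ε x b := by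
  induction m with
  | zero => exact ⟨_, _, isKolmogorovTriangular_elim0 S ε⟩
  | succ m ih =>
    obtain ⟨x, b, h⟩ := ih
    let N := Submodule.span ℝ (Set.range (S ∘ x))
    have hN : Module.rank ℝ N < (m + 1 : ℕ) := rank_span_range_lt_succ _
    obtain ⟨x', b', hx', hb', hb'N, hd⟩ := exists_annihilating_kolmogorovNumber_le S hε N hN
    exact ⟨_, _, h.snoc hx' hb' (fun i => hb'N _ (Submodule.subset_span ⟨i, rfl⟩)) hd⟩

end

theorem exists_triangular_system_kolmogorov_general
    {X Y : Type*} [NormedAddCommGroup X] [NormedSpace ℝ X]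
    [NormedAddCommGroup Y] [NormedSpace ℝ Y]
    (S : X →L[ℝ] Y) (n : ℕ) (ε : ℝ) (hε : 0 < ε) :
    ∃ (x : Fin n → X) (b : Fin n → (Y →L[ℝ] ℝ)),
      (∀ k, ‖x k‖ ≤ 1) ∧ (∀ k, ‖b k‖ ≤ 1) ∧
      (∀ k j : Fin n, k < j → b j (S (x k)) = 0) ∧
      (∀ k : Fin n, kolmogorovNumber ((k : ℕ) + 1) S ≤ (1 + ε) * |b k (S (x k))|) :=
  exists_isKolmogorovTriangular S hε n

theorem exists_triangular_system_kolmogorov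
    {X Y : Type*} [NormedAddCommGroup X] [NormedSpace ℝ X] [CompleteSpace X]
    [NormedAddCommGroup Y] [NormedSpace ℝ Y] [CompleteSpace Y]
    (S : X →L[ℝ] Y) (n : ℕ) (hn : 1 ≤ n) (ε : ℝ) (hε : 0 < ε) :
    ∃ (x : Fin n → X) (b : Fin n → (Y →L[ℝ] ℝ)),
      (∀ k, ‖x k‖ ≤ 1) ∧ (∀ k, ‖b k‖ ≤ 1) ∧
      (∀ k j : Fin n, k < j → b j (S (x k)) = 0) ∧
      (∀ k : Fin n, kolmogorovNumber ((k : ℕ) + 1) S ≤ (1 + ε) * |b k (S (x k))|) :=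
  exists_triangular_system_kolmogorov_general S n ε hε
end
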